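/- arXiv:1505.02566 — 2 statements merged into one kernel-verified Lean document; each statement's English description precedes it below -/
import Mathlib

section
/- With the abstract structure ‖y‖_Z² = ‖Ay‖² + η‖By‖², the unique solution (y,λ) of the mixed problem a(y,ȳ) + b(ȳ,λ) = l(ȳ) for all ȳ, b(y,λ̄) = 0 for all λ̄, with l(ȳ) = ⟨g, Aȳ⟩_{H₁} for a fixed g ∈ H₁, satisfies ‖y‖_Z ≤ ‖g‖_{H₁} and ‖λ‖_{H₂} ≤ 2√(C+η) ‖g‖_{H₁}, where (C+η)^{−1/2} is a lower bound for the inf-sup constant. -/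
/-!
Testing the first equation with `y` itself, whose constraint residual `B y` vanishes, gives
`‖A y‖² = ⟪g, A y⟫`, so `‖A y‖ ≤ ‖g‖`, and `‖y‖ = ‖A y‖`. Testing it with a preimage `y₀` of `λ`
under `B` of controlled `A`-norm gives `‖λ‖² = ⟪g - A y, A y₀⟫ ≤ 2‖g‖ · √C ‖λ‖`.
-/

open scoped RealInnerProductSpace

theorem le_of_sq_le_mul {a c : ℝ} (ha : 0 ≤ a) (hc : 0 ≤ c) (h : a ^ 2 ≤ c * a) : a ≤ c := by
  rcases ha.eq_or_lt with rfl | ha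
  · exact hc
  · nlinarith

theorem norm_le_of_norm_sq_le_inner {E : Type*} [NormedAddCommGroup E] [InnerProductSpace ℝ E]
    {u g : E} (h : ‖u‖ ^ 2 ≤ ⟪g, u⟫) : ‖u‖ ≤ ‖g‖ :=
  le_of_sq_le_mul (norm_nonneg u) (norm_nonneg g) (h.trans (real_inner_le_norm g u))

section MixedProblem

variable {Z H₁ H₂ : Type*} [NormedAddCommGroup Z] [InnerProductSpace ℝ Z]
    [NormedAddCommGroup H₁] [InnerProductSpace ℝ H₁]
    [NormedAddCommGroup H₂] [InnerProductSpace ℝ H₂]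
    {A : Z →ₗ[ℝ] H₁} {B : Z →ₗ[ℝ] H₂} {g : H₁} {y : Z} {lam : H₂}

theorem norm_apply_le_of_mixed (heq1 : ∀ yb : Z, ⟪A y, A yb⟫ + ⟪B yb, lam⟫ = ⟪g, A yb⟫)
    (hBy : B y = 0) : ‖A y‖ ≤ ‖g‖ := by
  have h := heq1 y
  rw [hBy, inner_zero_left, add_zero, real_inner_self_eq_norm_sq] at h
  exact norm_le_of_norm_sq_le_inner h.le

theorem norm_multiplier_le_of_mixed (heq1 : ∀ yb : Z, ⟪A y, A yb⟫ + ⟪B yb, lam⟫ = ⟪g, A yb⟫)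
    (hAy : ‖A y‖ ≤ ‖g‖) {y₀ : Z} (hBy₀ : B y₀ = lam) {K : ℝ} (hK : 0 ≤ K)
    (hAy₀ : ‖A y₀‖ ≤ K * ‖lam‖) : ‖lam‖ ≤ 2 * K * ‖g‖ := by
  have hlam : ‖lam‖ ^ 2 = ⟪g - A y, A y₀⟫ := by
    have h := heq1 y₀
    rw [hBy₀, real_inner_self_eq_norm_sq] at h
    rw [inner_sub_left]
    linarith
  refine le_of_sq_le_mul (norm_nonneg lam) (by positivity) ?_
  calc ‖lam‖ ^ 2 = ⟪g - A y, A y₀⟫ := hlam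
    _ ≤ ‖g - A y‖ * ‖A y₀‖ := real_inner_le_norm _ _
    _ ≤ (2 * ‖g‖) * (K * ‖lam‖) := by
        gcongr
        linarith [norm_sub_le g (A y)]
    _ = 2 * K * ‖g‖ * ‖lam‖ := by ring

end MixedProblem

theorem stmt_6_general {Z H₁ H₂ : Type*} [NormedAddCommGroup Z] [InnerProductSpace ℝ Z]
    [NormedAddCommGroup H₁] [InnerProductSpace ℝ H₁]
    [NormedAddCommGroup H₂] [InnerProductSpace ℝ H₂]
    (A : Z →ₗ[ℝ] H₁) (B : Z →ₗ[ℝ] H₂) (η C : ℝ) (hη : 0 < η)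
    (hnorm : ∀ y : Z, ‖y‖ ^ 2 = ‖A y‖ ^ 2 + η * ‖B y‖ ^ 2)
    (hinv : ∀ μ : H₂, ∃ y₀ : Z, B y₀ = μ ∧ ‖A y₀‖ ≤ Real.sqrt C * ‖μ‖)
    (g : H₁) (y : Z) (lam : H₂)
    (heq1 : ∀ yb : Z,
      (inner ℝ (A y) (A yb) : ℝ) + (inner ℝ (B yb) lam : ℝ) = (inner ℝ g (A yb) : ℝ))
    (heq2 : ∀ μ : H₂, (inner ℝ (B y) μ : ℝ) = 0) :
    ‖y‖ ≤ ‖g‖ ∧ ‖lam‖ ≤ 2 * Real.sqrt (C + η) * ‖g‖ := by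
  have hBy : B y = 0 := inner_self_eq_zero.mp (heq2 (B y))
  have hAy : ‖A y‖ ≤ ‖g‖ := norm_apply_le_of_mixed heq1 hBy
  constructor
  · have hy : ‖y‖ = ‖A y‖ := by
      rw [← sq_eq_sq₀ (norm_nonneg _) (norm_nonneg _), hnorm y, hBy, norm_zero]
      ring
    exact hy ▸ hAy
  · obtain ⟨y₀, hBy₀, hAy₀⟩ := hinv lam
    calc ‖lam‖ ≤ 2 * Real.sqrt C * ‖g‖ :=
          norm_multiplier_le_of_mixed heq1 hAy hBy₀ (Real.sqrt_nonneg C) hAy₀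
      _ ≤ 2 * Real.sqrt (C + η) * ‖g‖ := by gcongr; linarith

/-- Estimates (2.8): the solution (y,λ) of the mixed problem with data
l(yb) = ⟨g, Ayb⟩ satisfies ‖y‖_Z ≤ ‖g‖ and ‖λ‖ ≤ 2√(C+η)‖g‖. -/
theorem stmt_6 {Z H₁ H₂ : Type*} [NormedAddCommGroup Z] [InnerProductSpace ℝ Z]
    [NormedAddCommGroup H₁] [InnerProductSpace ℝ H₁]
    [NormedAddCommGroup H₂] [InnerProductSpace ℝ H₂]
    (A : Z →ₗ[ℝ] H₁) (B : Z →ₗ[ℝ] H₂) (η C : ℝ) (hη : 0 < η) (hC : 0 ≤ C)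
    (hnorm : ∀ y : Z, ‖y‖ ^ 2 = ‖A y‖ ^ 2 + η * ‖B y‖ ^ 2)
    (hinv : ∀ μ : H₂, ∃ y₀ : Z, B y₀ = μ ∧ ‖A y₀‖ ≤ Real.sqrt C * ‖μ‖)
    (g : H₁) (y : Z) (lam : H₂)
    (heq1 : ∀ yb : Z,
      (inner ℝ (A y) (A yb) : ℝ) + (inner ℝ (B yb) lam : ℝ) = (inner ℝ g (A yb) : ℝ))
    (heq2 : ∀ μ : H₂, (inner ℝ (B y) μ : ℝ) = 0) :
    ‖y‖ ≤ ‖g‖ ∧ ‖lam‖ ≤ 2 * Real.sqrt (C + η) * ‖g‖ :=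
  stmt_6_general A B η C hη hnorm hinv g y lam heq1 heq2
end

section
/- Let Z be a real Hilbert space, a_r : Z × Z → ℝ a continuous symmetric coercive bilinear form (a_r(y,y) ≥ α‖y‖_Z² with α > 0), M a Hilbert space, and B : Z → M a bounded linear map with b(y,λ) = ⟨By,λ⟩_M. Define P_r : M → M by P_r λ = B y_λ where y_λ ∈ Z is the unique solution of a_r(y_λ, ȳ) = b(ȳ, λ) for all ȳ ∈ Z. Then P_r is a bounded, symmetric (self-adjoint), positive semidefinite linear operator on M, and ⟨P_r λ, λ'⟩_M = a_r(y_λ, y_{λ'}) for all λ, λ' ∈ M. -/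
/-!
Testing the equation defining `y_λ'` against `y_λ` gives `⟨B y_λ, λ'⟩ = a(y_λ', y_λ)`.
Symmetry of `a` then makes `P λ = B y_λ` a symmetric map, and a symmetric map on an inner
product space is automatically linear. Testing `y_λ` against itself and using coercivity gives
`α ‖y_λ‖² ≤ ⟨B y_λ, λ⟩ ≤ ‖B‖ ‖y_λ‖ ‖λ‖`, hence positivity and `‖y_λ‖ ≤ ‖B‖ ‖λ‖ / α`.
-/

open scoped InnerProductSpace

theorem isLinearMap_of_inner_map_eq_inner {𝕜 E : Type*} [RCLike 𝕜] [NormedAddCommGroup E]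
    [InnerProductSpace 𝕜 E] {T : E → E} (hT : ∀ x y, ⟪T x, y⟫_𝕜 = ⟪x, T y⟫_𝕜) :
    IsLinearMap 𝕜 T where
  map_add x y := ext_inner_right 𝕜 fun v => by
    rw [hT, inner_add_left, inner_add_left, hT, hT]
  map_smul c x := ext_inner_right 𝕜 fun v => by
    rw [hT, inner_smul_left, inner_smul_left, hT]

theorem le_div_of_mul_sq_le_mul {α t c : ℝ} (hα : 0 < α) (hc : 0 ≤ c) (ht : 0 ≤ t)
    (h : α * t ^ 2 ≤ c * t) : t ≤ c / α := by
  rcases ht.eq_or_lt with rfl | ht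
  · positivity
  · rw [le_div_iff₀ hα]
    nlinarith

section DualOperator

variable {Z M : Type*} [NormedAddCommGroup Z] [InnerProductSpace ℝ Z]
  [NormedAddCommGroup M] [InnerProductSpace ℝ M]
  {a : Z →L[ℝ] Z →L[ℝ] ℝ} {B : Z →L[ℝ] M} {yof : M → Z}

theorem inner_dualOp_eq (hsymm : ∀ y z, a y z = a z y)
    (hyof : ∀ μ yb, a (yof μ) yb = ⟪B yb, μ⟫_ℝ) (μ μ' : M) :
    ⟪B (yof μ), μ'⟫_ℝ = a (yof μ) (yof μ') := by
  rw [← hyof μ' (yof μ), hsymm]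

theorem inner_dualOp_comm (hsymm : ∀ y z, a y z = a z y)
    (hyof : ∀ μ yb, a (yof μ) yb = ⟪B yb, μ⟫_ℝ) (μ μ' : M) :
    ⟪B (yof μ), μ'⟫_ℝ = ⟪μ, B (yof μ')⟫_ℝ := by
  rw [inner_dualOp_eq hsymm hyof, hsymm, ← inner_dualOp_eq hsymm hyof, real_inner_comm]

theorem norm_sol_le {α : ℝ} (hα : 0 < α) (hcoer : ∀ y, α * ‖y‖ ^ 2 ≤ a y y)
    (hyof : ∀ μ yb, a (yof μ) yb = ⟪B yb, μ⟫_ℝ) (μ : M) :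
    ‖yof μ‖ ≤ ‖B‖ * ‖μ‖ / α := by
  refine le_div_of_mul_sq_le_mul hα (by positivity) (norm_nonneg _) ?_
  calc α * ‖yof μ‖ ^ 2 ≤ a (yof μ) (yof μ) := hcoer _
    _ = ⟪B (yof μ), μ⟫_ℝ := hyof _ _
    _ ≤ ‖B (yof μ)‖ * ‖μ‖ := real_inner_le_norm _ _
    _ ≤ ‖B‖ * ‖yof μ‖ * ‖μ‖ := by gcongr; exact B.le_opNorm _
    _ = ‖B‖ * ‖μ‖ * ‖yof μ‖ := by ring

theorem norm_dualOp_le {α : ℝ} (hα : 0 < α) (hcoer : ∀ y, α * ‖y‖ ^ 2 ≤ a y y)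
    (hyof : ∀ μ yb, a (yof μ) yb = ⟪B yb, μ⟫_ℝ) (μ : M) :
    ‖B (yof μ)‖ ≤ ‖B‖ ^ 2 / α * ‖μ‖ :=
  calc ‖B (yof μ)‖ ≤ ‖B‖ * ‖yof μ‖ := B.le_opNorm _
    _ ≤ ‖B‖ * (‖B‖ * ‖μ‖ / α) := by gcongr; exact norm_sol_le hα hcoer hyof μ
    _ = ‖B‖ ^ 2 / α * ‖μ‖ := by ring

theorem inner_dualOp_self_nonneg {α : ℝ} (hα : 0 < α) (hcoer : ∀ y, α * ‖y‖ ^ 2 ≤ a y y)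
    (hyof : ∀ μ yb, a (yof μ) yb = ⟪B yb, μ⟫_ℝ) (μ : M) :
    0 ≤ ⟪B (yof μ), μ⟫_ℝ := by
  rw [← hyof]
  exact (by positivity : 0 ≤ α * ‖yof μ‖ ^ 2).trans (hcoer _)

end DualOperator

/-- The dual operator P_r λ = B y_λ, where a_r(y_λ,yb) = ⟨Byb,λ⟩, is a bounded,
self-adjoint, positive semidefinite linear operator with
⟨P_r λ, λ'⟩ = a_r(y_λ, y_{λ'}). -/
theorem stmt_9 {Z M : Type*} [NormedAddCommGroup Z] [InnerProductSpace ℝ Z]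
    [NormedAddCommGroup M] [InnerProductSpace ℝ M]
    (a_r : Z →L[ℝ] Z →L[ℝ] ℝ)
    (hsymm : ∀ y z : Z, a_r y z = a_r z y)
    (α : ℝ) (hα : 0 < α)
    (hcoer : ∀ y : Z, α * ‖y‖ ^ 2 ≤ a_r y y)
    (B : Z →L[ℝ] M)
    (yof : M → Z)
    (hyof : ∀ (μ : M) (yb : Z), a_r (yof μ) yb = (inner ℝ (B yb) μ : ℝ)) :
    IsLinearMap ℝ (fun μ => B (yof μ)) ∧
    (∃ K : ℝ, ∀ μ : M, ‖B (yof μ)‖ ≤ K * ‖μ‖) ∧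
    (∀ μ μ' : M, (inner ℝ (B (yof μ)) μ' : ℝ) = (inner ℝ μ (B (yof μ')) : ℝ)) ∧
    (∀ μ : M, 0 ≤ (inner ℝ (B (yof μ)) μ : ℝ)) ∧
    (∀ μ μ' : M, (inner ℝ (B (yof μ)) μ' : ℝ) = a_r (yof μ) (yof μ')) :=
  ⟨isLinearMap_of_inner_map_eq_inner (inner_dualOp_comm hsymm hyof),
    ⟨_, norm_dualOp_le hα hcoer hyof⟩, inner_dualOp_comm hsymm hyof,
    inner_dualOp_self_nonneg hα hcoer hyof, inner_dualOp_eq hsymm hyof⟩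
end
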